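/- For every natural number N ≥ 1 and every choice of real parameters (ωⱼ, αⱼ, φⱼ) for j = 1,…,N, the matrix entry ⟨1| ∏_{j=1}^{N} U^UAT(x; ωⱼ, αⱼ, φⱼ) |0⟩, as a function of x ∈ ℝ^m, can be written as a finite sum Σ_{k=1}^{K} cₖ e^{iδₖ} e^{i wₖ·x} where K ≤ 2^N, each cₖ ∈ ℝ, δₖ ∈ ℝ, and each wₖ ∈ ℝ^m is a linear combination with coefficients ±1 of ω₁,…,ω_N. -/
import Mathlib

open Complex Matrix

/-- The fundamental UAT gate. -/
noncomputable def UATgate {m : ℕ} (x ω : Fin m → ℝ) (α φ : ℝ) : Matrix (Fin 2) (Fin 2) ℂ :=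
  !![(Real.cos φ : ℂ) * Complex.exp (Complex.I * ((∑ i, ω i * x i) + α)),
     -(Real.sin φ : ℂ) * Complex.exp (Complex.I * ((∑ i, ω i * x i) + α));
     (Real.sin φ : ℂ) * Complex.exp (-(Complex.I * ((∑ i, ω i * x i) + α))),
     (Real.cos φ : ℂ) * Complex.exp (-(Complex.I * ((∑ i, ω i * x i) + α)))]

private lemma exp_mul_exp_aux (a c X Y : ℂ) :
    a * Complex.exp X * c * Complex.exp Y = a * c * Complex.exp (X + Y) := by
  rw [Complex.exp_add]; ring

private lemma uat_key {m : ℕ} : ∀ (N : ℕ) (ω : Fin N → (Fin m → ℝ)) (α φ : Fin N → ℝ)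
    (p q : Fin 2),
    ∃ (K : ℕ) (_ : K ≤ 2 ^ N) (c δ : Fin K → ℝ) (w : Fin K → (Fin m → ℝ)),
      (∀ k : Fin K, ∃ ε : Fin N → ℝ,
        (∀ j, ε j = 1 ∨ ε j = -1) ∧ w k = ∑ j, ε j • ω j) ∧
      ∀ x : Fin m → ℝ,
        ((List.ofFn fun j : Fin N => UATgate x (ω j) (α j) (φ j)).prod) p q =
          ∑ k : Fin K, (c k : ℂ) * Complex.exp (Complex.I * δ k) *
            Complex.exp (Complex.I * (∑ i, w k i * x i)) := by
  intro N
  induction N with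
  | zero =>
    intro ω α φ p q
    by_cases hpq : p = q
    · subst hpq
      refine ⟨1, le_refl _, fun _ => 1, fun _ => 0, fun _ => 0, ?_, ?_⟩
      · exact fun k => ⟨fun j => 1, fun j => j.elim0, by simp⟩
      · intro x; simp [Matrix.one_apply_eq]
    · refine ⟨0, by norm_num, Fin.elim0, Fin.elim0, Fin.elim0, fun k => k.elim0, ?_⟩
      intro x; simp [Matrix.one_apply_ne hpq]
  | succ N ih =>
    intro ω α φ p q
    obtain ⟨K₀, hK₀, c₀, δ₀, w₀, hw₀, hs₀⟩ :=
      ih (fun j => ω j.succ) (fun j => α j.succ) (fun j => φ j.succ) 0 q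
    obtain ⟨K₁, hK₁, c₁, δ₁, w₁, hw₁, hs₁⟩ :=
      ih (fun j => ω j.succ) (fun j => α j.succ) (fun j => φ j.succ) 1 q
    obtain ⟨a, b, σ, hσ, hgate⟩ : ∃ a b σ : ℝ, (σ = 1 ∨ σ = -1) ∧ ∀ (x : Fin m → ℝ) (r : Fin 2),
        UATgate x (ω 0) (α 0) (φ 0) p r =
          (if r = 0 then (a : ℂ) else (b : ℂ)) *
            Complex.exp (Complex.I * ((σ : ℂ) * ((∑ i, (ω 0 i : ℂ) * (x i : ℂ)) + (α 0 : ℂ)))) := by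
      fin_cases p
      · refine ⟨Real.cos (φ 0), -Real.sin (φ 0), 1, Or.inl rfl, ?_⟩
        intro x r; fin_cases r <;> simp [UATgate] <;> push_cast <;> ring_nf <;> tauto
      · refine ⟨Real.sin (φ 0), Real.cos (φ 0), -1, Or.inr rfl, ?_⟩
        intro x r; fin_cases r <;> simp [UATgate] <;> push_cast <;> ring_nf <;> tauto
    refine ⟨K₀ + K₁, ?_,
      Fin.addCases (fun k => a * c₀ k) (fun k => b * c₁ k),
      Fin.addCases (fun k => δ₀ k + σ * α 0) (fun k => δ₁ k + σ * α 0),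
      Fin.addCases (fun k => σ • ω 0 + w₀ k) (fun k => σ • ω 0 + w₁ k), ?_, ?_⟩
    · calc K₀ + K₁ ≤ 2 ^ N + 2 ^ N := add_le_add hK₀ hK₁
        _ = 2 ^ (N + 1) := by ring
    · intro k
      refine Fin.addCases ?_ ?_ k
      · intro k0
        obtain ⟨ε, hε, hw⟩ := hw₀ k0
        refine ⟨Fin.cons σ ε, ?_, ?_⟩
        · intro j
          refine Fin.cases ?_ ?_ j
          · simpa using hσ
          · intro j; simpa using hε j
        · simp [Fin.sum_univ_succ, hw]
      · intro k1
        obtain ⟨ε, hε, hw⟩ := hw₁ k1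
        refine ⟨Fin.cons σ ε, ?_, ?_⟩
        · intro j
          refine Fin.cases ?_ ?_ j
          · simpa using hσ
          · intro j; simpa using hε j
        · simp [Fin.sum_univ_succ, hw]
    · intro x
      rw [List.ofFn_succ, List.prod_cons, Matrix.mul_apply, Fin.sum_univ_two,
        hgate x 0, hgate x 1, hs₀ x, hs₁ x, Fin.sum_univ_add]
      simp only [Fin.addCases_left, Fin.addCases_right, if_pos rfl, Fin.one_eq_zero_iff,
        if_neg (by decide : (1 : Fin 2) ≠ 0)]
      rw [Finset.mul_sum, Finset.mul_sum]
      congr 1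
      · refine Finset.sum_congr rfl fun k _ => ?_
        simp only [Pi.add_apply, Pi.smul_apply, smul_eq_mul, add_mul,
          Finset.sum_add_distrib]
        push_cast
        simp only [mul_assoc]
        rw [← Finset.mul_sum]
        simp only [← Complex.exp_add]
        ring_nf
        rw [exp_mul_exp_aux]
        ring_nf
      · refine Finset.sum_congr rfl fun k _ => ?_
        simp only [Pi.add_apply, Pi.smul_apply, smul_eq_mul, add_mul,
          Finset.sum_add_distrib]
        push_cast
        simp only [mul_assoc]
        rw [← Finset.mul_sum]
        simp only [← Complex.exp_add]
        ring_nf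
        rw [exp_mul_exp_aux]
        ring_nf

theorem uat_circuit_amplitude_form {m N : ℕ} (hN : 1 ≤ N)
    (ω : Fin N → (Fin m → ℝ)) (α φ : Fin N → ℝ) :
    ∃ (K : ℕ) (_ : K ≤ 2 ^ N) (c δ : Fin K → ℝ) (w : Fin K → (Fin m → ℝ)),
      (∀ k : Fin K, ∃ ε : Fin N → ℝ,
        (∀ j, ε j = 1 ∨ ε j = -1) ∧ w k = ∑ j, ε j • ω j) ∧
      ∀ x : Fin m → ℝ,
        ((List.ofFn fun j : Fin N => UATgate x (ω j) (α j) (φ j)).prod) 1 0 =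
          ∑ k : Fin K, (c k : ℂ) * Complex.exp (Complex.I * δ k) *
            Complex.exp (Complex.I * (∑ i, w k i * x i)) := by
  exact uat_key N ω α φ 1 0
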